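/- For all real z > 0 and all real ν > 1/2, one has ν·log(z/2) − log(Γ(ν+1)) + (1/(2(ν+1)))·log(cosh(z)) < log(I_ν(z)) < ν·log(z/2) − log(Γ(ν+1)) + log(cosh(z)). -/

import Mathlib

/-!
With `q = (z/2)²` and `₀F₁(a; q) = ∑ qᵏ / (k! (a)ₖ)`, the series of `I_ν` and of `cosh` read
`I_ν(z) = (z/2)^ν / Γ(ν+1) · ₀F₁(ν+1; q)` and `cosh z = ₀F₁(1/2; q)`. Termwise comparison of
Pochhammer symbols gives `₀F₁(ν+1; q) < ₀F₁(1/2; q) = cosh z`, and, because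
`(ν+1)ₖ ≤ (2(ν+1))ᵏ (1/2)ₖ`, also `cosh (t z) = ₀F₁(1/2; t² q) < ₀F₁(ν+1; q)` for
`t² = 1/(2(ν+1))`. Finally `log cosh x / x²` decreases on `(0, ∞)`, so
`t² log cosh z ≤ log cosh (t z)`.
-/

/-- The modified Bessel function of the first kind of order `ν`, defined for `z > 0` by
`I_ν(z) = ∑_{k=0}^∞ (1/(k! Γ(ν+k+1))) (z/2)^(ν+2k)`. -/
noncomputable def besselI (ν z : ℝ) : ℝ :=
  ∑' k : ℕ, (1 / (k.factorial * Real.Gamma (ν + (k : ℝ) + 1))) * (z / 2) ^ (ν + 2 * (k : ℝ))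

open Real Set Polynomial
open scoped Nat

lemma ascPochhammer_eval_eq_prod_range {S : Type*} [CommSemiring S] (r : S) (n : ℕ) :
    (ascPochhammer S n).eval r = ∏ j ∈ Finset.range n, (r + j) := by
  induction n with
  | zero => simp
  | succ n ih => rw [ascPochhammer_succ_eval, ih, Finset.prod_range_succ]

lemma pow_le_ascPochhammer_eval {a : ℝ} (ha : 0 ≤ a) (n : ℕ) :
    a ^ n ≤ (ascPochhammer ℝ n).eval a := by
  rw [ascPochhammer_eval_eq_prod_range, Finset.pow_eq_prod_const]
  exact Finset.prod_le_prod (fun _ _ ↦ ha) fun j _ ↦ le_add_of_nonneg_right j.cast_nonneg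

lemma ascPochhammer_eval_le_of_le {a b : ℝ} (ha : 0 ≤ a) (hab : a ≤ b) (n : ℕ) :
    (ascPochhammer ℝ n).eval a ≤ (ascPochhammer ℝ n).eval b := by
  simp only [ascPochhammer_eval_eq_prod_range]
  exact Finset.prod_le_prod (fun j _ ↦ by positivity) fun j _ ↦ by linarith

lemma pow_mul_ascPochhammer_eval_le {a c : ℝ} (hc : 0 ≤ c) (hca : c ≤ a) (n : ℕ) :
    c ^ n * (ascPochhammer ℝ n).eval a ≤ a ^ n * (ascPochhammer ℝ n).eval c := by
  simp only [ascPochhammer_eval_eq_prod_range, Finset.pow_eq_prod_const,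
    ← Finset.prod_mul_distrib]
  refine Finset.prod_le_prod (fun j _ ↦ mul_nonneg hc (add_nonneg (hc.trans hca) j.cast_nonneg))
    fun j _ ↦ ?_
  nlinarith [mul_le_mul_of_nonneg_right hca j.cast_nonneg]

lemma Gamma_add_nat_eq_mul_ascPochhammer {s : ℝ} (hs : ∀ m : ℕ, s ≠ -m) (n : ℕ) :
    Gamma (s + n) = Gamma s * (ascPochhammer ℝ n).eval s := by
  induction n with
  | zero => simp
  | succ n ih =>
    rw [Nat.cast_succ, ← add_assoc, Gamma_add_one, ih, ascPochhammer_succ_eval]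
    · ring
    · exact_mod_cast hs n ∘ eq_neg_of_add_eq_zero_left

lemma factorial_two_mul_eq_four_pow_mul_ascPochhammer_half (n : ℕ) :
    ((2 * n)! : ℝ) = 4 ^ n * n ! * (ascPochhammer ℝ n).eval (1 / 2) := by
  induction n with
  | zero => simp
  | succ n ih =>
    rw [Nat.mul_succ, Nat.factorial_succ, Nat.factorial_succ, Nat.factorial_succ,
      ascPochhammer_succ_eval]
    push_cast
    rw [ih]
    ring

noncomputable def hypergeometric0F1Term (a q : ℝ) (k : ℕ) : ℝ :=
  q ^ k / (k ! * (ascPochhammer ℝ k).eval a)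

noncomputable def hypergeometric0F1 (a q : ℝ) : ℝ :=
  ∑' k, hypergeometric0F1Term a q k

lemma hypergeometric0F1Term_nonneg {a q : ℝ} (ha : 0 < a) (hq : 0 ≤ q) (k : ℕ) :
    0 ≤ hypergeometric0F1Term a q k :=
  div_nonneg (pow_nonneg hq k) (mul_nonneg (by positivity) (ascPochhammer_pos k a ha).le)

lemma summable_hypergeometric0F1Term {a : ℝ} (ha : 0 < a) (q : ℝ) :
    Summable (hypergeometric0F1Term a q) := by
  refine .of_norm_bounded (Real.summable_pow_div_factorial (|q| / a)) fun k ↦ ?_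
  have hpos := ascPochhammer_pos k a ha
  rw [hypergeometric0F1Term, norm_div, norm_pow, Real.norm_eq_abs,
    Real.norm_of_nonneg (by positivity), div_pow, div_div, mul_comm]
  exact div_le_div_of_nonneg_left (by positivity) (by positivity)
    (mul_le_mul_of_nonneg_right (pow_le_ascPochhammer_eval ha.le k) (by positivity))

lemma one_le_hypergeometric0F1 {a q : ℝ} (ha : 0 < a) (hq : 0 ≤ q) :
    1 ≤ hypergeometric0F1 a q := by
  simpa [hypergeometric0F1, hypergeometric0F1Term] using
    (summable_hypergeometric0F1Term ha q).le_tsum 0 fun k _ ↦ hypergeometric0F1Term_nonneg ha hq k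

lemma hypergeometric0F1_lt_of_lt {a b q : ℝ} (ha : 0 < a) (hab : a < b) (hq : 0 < q) :
    hypergeometric0F1 b q < hypergeometric0F1 a q := by
  refine Summable.tsum_lt_tsum_of_nonneg (i := 1)
    (hypergeometric0F1Term_nonneg (ha.trans hab) hq.le) (fun k ↦ ?_) ?_
    (summable_hypergeometric0F1Term ha q)
  · exact div_le_div_of_nonneg_left (pow_nonneg hq.le k)
      (mul_pos (by positivity) (ascPochhammer_pos k a ha))
      (mul_le_mul_of_nonneg_left (ascPochhammer_eval_le_of_le ha.le hab.le k) (by positivity))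
  · simpa [hypergeometric0F1Term] using div_lt_div_of_pos_left hq ha hab

lemma hypergeometric0F1_div_mul_lt {a c q : ℝ} (hc : 0 < c) (hca : c < a) (hq : 0 < q) :
    hypergeometric0F1 c (c / a * q) < hypergeometric0F1 a q := by
  have ha := hc.trans hca
  refine Summable.tsum_lt_tsum_of_nonneg (i := 2)
    (hypergeometric0F1Term_nonneg hc (by positivity)) (fun k ↦ ?_) ?_
    (summable_hypergeometric0F1Term ha q)
  · have hA := ascPochhammer_pos k a ha
    have hC := ascPochhammer_pos k c hc
    have key := pow_mul_ascPochhammer_eval_le hc.le hca.le k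
    rw [hypergeometric0F1Term, hypergeometric0F1Term,
      div_le_div_iff₀ (by positivity) (by positivity), mul_pow, div_pow]
    field_simp
    exact key
  · simp only [hypergeometric0F1Term, Nat.factorial_two, Nat.cast_ofNat, ascPochhammer_succ_eval,
      ascPochhammer_one, eval_X, Nat.cast_one]
    rw [div_lt_div_iff₀ (by positivity) (by positivity)]
    field_simp
    linarith

lemma cosh_eq_hypergeometric0F1 (x : ℝ) : cosh x = hypergeometric0F1 (1 / 2) ((x / 2) ^ 2) := by
  rw [cosh_eq_tsum]
  refine tsum_congr fun k ↦ ?_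
  rw [hypergeometric0F1Term, factorial_two_mul_eq_four_pow_mul_ascPochhammer_half, ← pow_mul,
    div_pow, pow_mul 2 2 k]
  have := ascPochhammer_pos k (1 / 2 : ℝ) (by norm_num)
  field_simp
  norm_num

lemma besselI_eq_mul_hypergeometric0F1 {ν z : ℝ} (hν : ∀ m : ℕ, ν + 1 ≠ -m)
    (hz : 0 < z) :
    besselI ν z = (z / 2) ^ ν / Gamma (ν + 1) * hypergeometric0F1 (ν + 1) ((z / 2) ^ 2) := by
  rw [besselI, hypergeometric0F1, ← tsum_mul_left]
  refine tsum_congr fun k ↦ ?_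
  rw [show ν + k + 1 = ν + 1 + k by ring, Gamma_add_nat_eq_mul_ascPochhammer hν,
    rpow_add (by positivity), show 2 * (k : ℝ) = (2 * k : ℕ) by push_cast; ring, rpow_natCast,
    pow_mul, hypergeometric0F1Term]
  ring

lemma log_besselI_eq {ν z : ℝ} (hν : -1 < ν) (hz : 0 < z) :
    log (besselI ν z) =
      ν * log (z / 2) - log (Gamma (ν + 1)) + log (hypergeometric0F1 (ν + 1) ((z / 2) ^ 2)) := by
  have hν₁ : 0 < ν + 1 := by linarith
  have hF := one_le_hypergeometric0F1 hν₁ (sq_nonneg (z / 2))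
  have hΓ := Gamma_pos_of_pos hν₁
  rw [besselI_eq_mul_hypergeometric0F1 (fun m ↦ by linarith [m.cast_nonneg (α := ℝ)]) hz,
    log_mul (by positivity) (by positivity), log_div (by positivity) hΓ.ne',
    log_rpow (by positivity)]

lemma mul_sinh_div_cosh_le_two_log_cosh {x : ℝ} (hx : 0 ≤ x) :
    x * sinh x / cosh x ≤ 2 * log (cosh x) := by
  let F : ℝ → ℝ := fun y ↦ 2 * log (cosh y) - y * sinh y / cosh y
  have hF' (y : ℝ) : HasDerivAt F ((sinh y * cosh y - y) / cosh y ^ 2) y := by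
    have := (cosh_pos y).ne'
    refine ((((hasDerivAt_cosh y).log this).const_mul 2).sub
      (((hasDerivAt_id' y).mul (hasDerivAt_sinh y)).div (hasDerivAt_cosh y) this)).congr_deriv ?_
    simp only [Pi.mul_apply]
    field_simp
    linear_combination (-y) * cosh_sq y
  have hmono : MonotoneOn F (Ici 0) := by
    refine monotoneOn_of_hasDerivWithinAt_nonneg (convex_Ici 0)
      (fun y _ ↦ (hF' y).continuousAt.continuousWithinAt) (fun y _ ↦ (hF' y).hasDerivWithinAt)
      fun y hy ↦ div_nonneg ?_ (sq_nonneg _)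
    rw [interior_Ici, mem_Ioi] at hy
    nlinarith [self_le_sinh_iff.2 hy.le, one_le_cosh y]
  have := hmono self_mem_Ici hx hx
  simp only [F, cosh_zero, log_one, sinh_zero] at this
  linarith

lemma antitoneOn_log_cosh_div_sq : AntitoneOn (fun x ↦ log (cosh x) / x ^ 2) (Ioi 0) := by
  have hG' {x : ℝ} (hx : x ≠ 0) : HasDerivAt (fun x ↦ log (cosh x) / x ^ 2)
      (x * (x * sinh x / cosh x - 2 * log (cosh x)) / (x ^ 2) ^ 2) x := by
    have := (cosh_pos x).ne'
    refine (((hasDerivAt_cosh x).log this).div (hasDerivAt_pow 2 x)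
      (pow_ne_zero 2 hx)).congr_deriv ?_
    field_simp
    ring
  refine antitoneOn_of_hasDerivWithinAt_nonpos (convex_Ioi 0)
    (fun x hx ↦ (hG' (ne_of_gt hx)).continuousAt.continuousWithinAt)
    (fun x hx ↦ (hG' (ne_of_gt (interior_subset hx))).hasDerivWithinAt) fun x hx ↦ ?_
  rw [interior_Ioi, mem_Ioi] at hx
  exact div_nonpos_of_nonpos_of_nonneg
    (mul_nonpos_of_nonneg_of_nonpos hx.le (by linarith [mul_sinh_div_cosh_le_two_log_cosh hx.le]))
    (by positivity)

lemma sq_mul_log_cosh_le_log_cosh_mul {t : ℝ} (ht₀ : 0 ≤ t) (ht₁ : t ≤ 1) (x : ℝ) :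
    t ^ 2 * log (cosh x) ≤ log (cosh (t * x)) := by
  rw [← cosh_abs x, ← cosh_abs (t * x), abs_mul, abs_of_nonneg ht₀]
  rcases ht₀.eq_or_lt with rfl | ht
  · simp
  rcases (abs_nonneg x).eq_or_lt with hx | hx
  · simp [← hx]
  have h := antitoneOn_log_cosh_div_sq (mul_pos ht hx) hx (mul_le_of_le_one_left hx.le ht₁)
  rw [div_le_div_iff₀ (by positivity) (by positivity), mul_pow] at h
  exact le_of_mul_le_mul_right (by linarith) (pow_pos hx 2)

theorem log_besselI_bounds (z ν : ℝ) (hz : 0 < z) (hν : 1/2 < ν) :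
    ν * Real.log (z / 2) - Real.log (Real.Gamma (ν + 1))
        + (1 / (2 * (ν + 1))) * Real.log (Real.cosh z) < Real.log (besselI ν z) ∧
      Real.log (besselI ν z) <
        ν * Real.log (z / 2) - Real.log (Real.Gamma (ν + 1)) + Real.log (Real.cosh z) := by
  have hν₁ : 1 / 2 < ν + 1 := by linarith
  have hq : 0 < (z / 2) ^ 2 := by positivity
  set t := √(1 / (2 * (ν + 1)))
  have ht_sq : t ^ 2 = 1 / (2 * (ν + 1)) := sq_sqrt (by positivity)
  have ht_le_one : t ≤ 1 := sqrt_le_one.mpr ((div_le_one (by positivity)).mpr (by linarith))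
  have hlower : cosh (t * z) < hypergeometric0F1 (ν + 1) ((z / 2) ^ 2) := by
    rw [cosh_eq_hypergeometric0F1, mul_div_assoc, mul_pow, ht_sq, ← div_div]
    exact hypergeometric0F1_div_mul_lt (by norm_num) hν₁ hq
  have hupper : hypergeometric0F1 (ν + 1) ((z / 2) ^ 2) < cosh z := by
    rw [cosh_eq_hypergeometric0F1 z]
    exact hypergeometric0F1_lt_of_lt (by norm_num) hν₁ hq
  have hcosh := sq_mul_log_cosh_le_log_cosh_mul (sqrt_nonneg _) ht_le_one z
  rw [ht_sq] at hcosh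
  rw [log_besselI_eq (by linarith) hz]
  constructor
  · linarith [log_lt_log (cosh_pos _) hlower]
  · linarith [log_lt_log ((cosh_pos _).trans hlower) hupper]
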